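/- For every t > 0, every index i ∈ {1,…,q} and every x_i > 0, integrating g(x,t) over the remaining q−1 coordinates yields the Gamma(λt, (1−θ)a_i) density: ∫_{(0,∞)^{q−1}} g(x,t) ∏_{j≠i} dx_j = γ_{λt,(1−θ)a_i}(x_i). That is, the i-th marginal of the multivariate gamma subordinator at time t has the Gamma(λt, (1−θ)a_i) distribution. -/

import Mathlib

open scoped BigOperators
open MeasureTheory

/-- The density of the multivariate gamma subordinator at point `x` and time `t`. -/
noncomputable def mvGammaPdf (q : ℕ) (lam θ : ℝ) (a : Fin q → ℝ) (x : Fin q → ℝ) (t : ℝ) : ℝ :=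
  ((1 - θ) ^ (lam * t) / Real.Gamma (lam * t)) *
    ∑' n : ℕ, (θ ^ n / ((n.factorial : ℝ) * Real.Gamma ((n : ℝ) + lam * t) ^ (q - 1))) *
      ∏ i, ((a i * x i) ^ ((n : ℝ) + lam * t) / x i * Real.exp (-(a i * x i)))

/-- The Gamma(r, b) probability density. -/
noncomputable def gammaPdf (r b x : ℝ) : ℝ :=
  b ^ r * x ^ (r - 1) * Real.exp (-(b * x)) / Real.Gamma r

/-!
Write `K_b^p(y) = (b y)^p / y · e^{-b y}`, so that `∫₀^∞ K_b^p = Γ(p)`. The `n`-th term of the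
series defining the density is a product of such kernels with `p = n + λt`, so integrating out the
`q - 1` coordinates `j ≠ i` produces `Γ(n + λt)^{q-1}`, cancelling the normalisation, and leaves
`θ^n / n! · K_{a_i}^{n+λt}(x_i) = (θ a_i x_i)^n / n! · K_{a_i}^{λt}(x_i)`. All terms are
nonnegative, so the series may be integrated termwise, and summing over `n` gives the factor
`e^{θ a_i x_i}`, which turns `e^{-a_i x_i}` into the `e^{-(1-θ) a_i x_i}` of the Gamma density.
-/

open Real Set

noncomputable def gammaKernel (b p y : ℝ) : ℝ := (b * y) ^ p / y * exp (-(b * y))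

section GammaKernel

variable {b p y : ℝ}

lemma gammaKernel_eq_rpow_mul_exp (hb : 0 ≤ b) (hy : 0 < y) :
    gammaKernel b p y = b ^ p * (y ^ (p - 1) * exp (-(b * y))) := by
  rw [gammaKernel, mul_rpow hb hy.le, rpow_sub_one hy.ne']
  ring

lemma gammaKernel_nonneg (hb : 0 ≤ b) (hy : 0 < y) : 0 ≤ gammaKernel b p y := by
  rw [gammaKernel_eq_rpow_mul_exp hb hy]
  positivity

lemma gammaPdf_eq_gammaKernel_div (hb : 0 ≤ b) (hy : 0 < y) :
    gammaPdf p b y = gammaKernel b p y / Gamma p := by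
  rw [gammaPdf, gammaKernel_eq_rpow_mul_exp hb hy, mul_assoc]

lemma integral_gammaKernel (hb : 0 < b) (hp : 0 < p) :
    ∫ y in Ioi 0, gammaKernel b p y = Gamma p := by
  rw [setIntegral_congr_fun measurableSet_Ioi fun y hy => gammaKernel_eq_rpow_mul_exp hb.le hy,
    integral_const_mul, integral_rpow_mul_exp_neg_mul_Ioi hp hb, ← mul_assoc,
    ← mul_rpow hb.le (one_div_nonneg.2 hb.le), mul_one_div_cancel hb.ne', one_rpow, one_mul]

lemma integrableOn_gammaKernel (hb : 0 < b) (hp : 0 < p) :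
    IntegrableOn (gammaKernel b p) (Ioi 0) :=
  Integrable.of_integral_ne_zero <| by
    rw [integral_gammaKernel hb hp]
    exact (Gamma_pos_of_pos hp).ne'

lemma gammaKernel_natCast_add (hby : 0 < b * y) (n : ℕ) :
    gammaKernel b (n + p) y = (b * y) ^ n * gammaKernel b p y := by
  rw [gammaKernel, gammaKernel, rpow_add hby, rpow_natCast]
  ring

lemma gammaKernel_mul_left {c : ℝ} (hc : 0 ≤ c) (hby : 0 ≤ b * y) :
    gammaKernel (c * b) p y = c ^ p * exp ((1 - c) * (b * y)) * gammaKernel b p y := by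
  rw [gammaKernel, gammaKernel, mul_assoc, mul_rpow hc hby]
  have : exp (-(c * (b * y))) = exp ((1 - c) * (b * y)) * exp (-(b * y)) := by
    rw [← exp_add]; ring_nf
  rw [this]
  ring

lemma hasSum_pow_div_factorial_mul_gammaKernel (θ : ℝ) (hby : 0 < b * y) :
    HasSum (fun n : ℕ => θ ^ n / n.factorial * gammaKernel b (n + p) y)
      (exp (θ * (b * y)) * gammaKernel b p y) := by
  rw [exp_eq_exp_ℝ]
  refine ((NormedSpace.expSeries_div_hasSum_exp (θ * (b * y))).mul_right
    (gammaKernel b p y)).congr_fun fun n => ?_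
  rw [gammaKernel_natCast_add hby, mul_pow]
  ring

end GammaKernel

section PiProduct

variable {ι : Type*} [Fintype ι] {E : ι → Type*} {mE : ∀ i, MeasurableSpace (E i)}
  {μ : (i : ι) → Measure (E i)} [∀ i, SigmaFinite (μ i)] {s : (i : ι) → Set (E i)}
  {f : (i : ι) → E i → ℝ}

lemma setIntegral_univ_pi_prod :
    ∫ x in univ.pi s, ∏ i, f i (x i) ∂Measure.pi μ = ∏ i, ∫ x in s i, f i x ∂μ i := by
  rw [Measure.restrict_pi_pi]
  exact integral_fintype_prod_eq_prod f

lemma integrableOn_univ_pi_prod (hf : ∀ i, IntegrableOn (f i) (s i) (μ i)) :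
    IntegrableOn (fun x => ∏ i, f i (x i)) (univ.pi s) (Measure.pi μ) := by
  rw [IntegrableOn, Measure.restrict_pi_pi]
  exact Integrable.fintype_prod_dep hf

end PiProduct

lemma integral_tsum_of_nonneg {α : Type*} [MeasurableSpace α] {μ : Measure α} {F : ℕ → α → ℝ}
    (hF_int : ∀ n, Integrable (F n) μ) (hF_nonneg : ∀ n, 0 ≤ᵐ[μ] F n)
    (hF_sum : Summable fun n => ∫ a, F n a ∂μ) :
    ∫ a, ∑' n, F n a ∂μ = ∑' n, ∫ a, F n a ∂μ := by
  refine (integral_tsum_of_summable_integral_norm hF_int (hF_sum.congr fun n => ?_)).symm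
  exact integral_congr_ae <| (hF_nonneg n).mono fun a ha => (Real.norm_of_nonneg ha).symm

section Orthant

variable {ι : Type*} [Fintype ι] {b : ι → ℝ} {p : ℝ}

lemma setIntegral_univ_pi_Ioi_prod_gammaKernel (hb : ∀ j, 0 < b j) (hp : 0 < p) :
    ∫ y in univ.pi fun _ : ι => Ioi (0 : ℝ), ∏ j, gammaKernel (b j) p (y j)
      = Gamma p ^ Fintype.card ι := by
  rw [volume_pi, setIntegral_univ_pi_prod,
    Finset.prod_congr rfl fun j _ => integral_gammaKernel (hb j) hp, Finset.prod_const,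
    Finset.card_univ]

lemma integrableOn_univ_pi_Ioi_prod_gammaKernel (hb : ∀ j, 0 < b j) (hp : 0 < p) :
    IntegrableOn (fun y : ι → ℝ => ∏ j, gammaKernel (b j) p (y j))
      (univ.pi fun _ => Ioi 0) :=
  integrableOn_univ_pi_prod fun j => integrableOn_gammaKernel (hb j) hp

lemma prod_gammaKernel_nonneg (hb : ∀ j, 0 ≤ b j) {y : ι → ℝ} (hy : ∀ j, 0 < y j) :
    0 ≤ ∏ j, gammaKernel (b j) p (y j) :=
  Finset.prod_nonneg fun j _ => gammaKernel_nonneg (hb j) (hy j)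

end Orthant

lemma mvGammaPdf_eq_tsum_mul_prod_subtype_ne {q : ℕ} (lam θ : ℝ) (a : Fin q → ℝ) (t : ℝ)
    (i : Fin q) (xi : ℝ) (y : {j : Fin q // j ≠ i} → ℝ) :
    mvGammaPdf q lam θ a (fun j => if h : j = i then xi else y ⟨j, h⟩) t
      = (1 - θ) ^ (lam * t) / Gamma (lam * t) * ∑' n : ℕ,
        θ ^ n / (n.factorial * Gamma (n + lam * t) ^ (q - 1)) * gammaKernel (a i) (n + lam * t) xi
          * ∏ j : {j : Fin q // j ≠ i}, gammaKernel (a j) (n + lam * t) (y j) := by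
  have hy (j : {j : Fin q // j ≠ i}) : (if h : (j : Fin q) = i then xi else y ⟨j, h⟩) = y j :=
    dif_neg j.2
  simp only [mvGammaPdf, Fintype.prod_eq_mul_prod_subtype_ne _ i, hy, dif_pos, gammaKernel,
    mul_assoc]

theorem mvGammaPdf_marginal_general
    (q : ℕ) (lam θ : ℝ) (hlam : 0 < lam) (hθ0 : 0 < θ) (hθ1 : θ < 1)
    (a : Fin q → ℝ) (ha : ∀ i, 0 < a i) (t : ℝ) (ht : 0 < t)
    (i : Fin q) (xi : ℝ) (hxi : 0 < xi) :
    (∫ y in Set.univ.pi fun _ : {j : Fin q // j ≠ i} => Set.Ioi (0 : ℝ),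
        mvGammaPdf q lam θ a (fun j => if h : j = i then xi else y ⟨j, h⟩) t)
      = gammaPdf (lam * t) ((1 - θ) * a i) xi := by
  set r := lam * t
  have hr (n : ℕ) : 0 < n + r := by positivity
  have ha' (j : {j : Fin q // j ≠ i}) : 0 < a j := ha j
  let c (n : ℕ) : ℝ :=
    θ ^ n / (n.factorial * Gamma (n + r) ^ (q - 1)) * gammaKernel (a i) (n + r) xi
  let F (n : ℕ) (y : {j : Fin q // j ≠ i} → ℝ) : ℝ :=
    c n * ∏ j : {j : Fin q // j ≠ i}, gammaKernel (a j) (n + r) (y j)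
  have hF (n : ℕ) : ∫ y in univ.pi fun _ => Ioi 0, F n y
      = θ ^ n / n.factorial * gammaKernel (a i) (n + r) xi := by
    have hΓ : Gamma (n + r) ≠ 0 := (Gamma_pos_of_pos (hr n)).ne'
    rw [integral_const_mul, setIntegral_univ_pi_Ioi_prod_gammaKernel ha' (hr n),
      Fintype.card_subtype_compl, Fintype.card_subtype_eq, Fintype.card_fin]
    simp only [c]
    field_simp
  have hF_int (n : ℕ) : IntegrableOn (F n) (univ.pi fun _ => Ioi 0) :=
    (integrableOn_univ_pi_Ioi_prod_gammaKernel ha' (hr n)).const_mul _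
  have hF_nonneg (n : ℕ) : 0 ≤ᵐ[volume.restrict (univ.pi fun _ => Ioi 0)] F n := by
    filter_upwards [ae_restrict_mem (MeasurableSet.univ_pi fun _ => measurableSet_Ioi)] with y hy
    exact mul_nonneg (mul_nonneg (by positivity) (gammaKernel_nonneg (ha i).le hxi))
      (prod_gammaKernel_nonneg (fun j => (ha' j).le) fun j => hy j (mem_univ j))
  have hsum := hasSum_pow_div_factorial_mul_gammaKernel (p := r) θ (mul_pos (ha i) hxi)
  simp_rw [mvGammaPdf_eq_tsum_mul_prod_subtype_ne]
  rw [integral_const_mul, integral_tsum_of_nonneg hF_int hF_nonneg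
      (by simpa only [hF] using hsum.summable), tsum_congr hF, hsum.tsum_eq,
    gammaPdf_eq_gammaKernel_div (mul_nonneg (by linarith) (ha i).le) hxi,
    gammaKernel_mul_left (by linarith) (mul_pos (ha i) hxi).le, sub_sub_cancel]
  ring

theorem mvGammaPdf_marginal
    (q : ℕ) (hq : 1 ≤ q) (lam θ : ℝ) (hlam : 0 < lam) (hθ0 : 0 < θ) (hθ1 : θ < 1)
    (a : Fin q → ℝ) (ha : ∀ i, 0 < a i) (t : ℝ) (ht : 0 < t)
    (i : Fin q) (xi : ℝ) (hxi : 0 < xi) :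
    (∫ y in Set.univ.pi fun _ : {j : Fin q // j ≠ i} => Set.Ioi (0 : ℝ),
        mvGammaPdf q lam θ a (fun j => if h : j = i then xi else y ⟨j, h⟩) t)
      = gammaPdf (lam * t) ((1 - θ) * a i) xi :=
  mvGammaPdf_marginal_general q lam θ hlam hθ0 hθ1 a ha t ht i xi hxi
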